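/- Symmetrisation of the LP T-GOSPA quasi-metric: if the base distance d_b is a metric, then for all ρ ∈ (0,1), d̄_p^{(c,1/2,γ)}(𝐗,𝐘) = [ (1/2)( d̄_p^{(c,ρ,γ)}(𝐗,𝐘)^p + d̄_p^{(c,ρ,γ)}(𝐘,𝐗)^p ) ]^{1/p}. -/
import Mathlib


open Finset

/-- The `p`-th power of the base-case GOSPA quasi-metric between at-most-one-element
sets: `min(c, db)^p` if both exist, `ρ c^p` if only the second exists, `(1−ρ) c^p`
if only the first exists, `0` if neither exists. -/
noncomputable def pairD {X : Type*} (db : X → X → ℝ) (c p ρ : ℝ) :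
    Option X → Option X → ℝ
  | some a, some b => min c (db a b) ^ p
  | none, some _ => ρ * c ^ p
  | some _, none => (1 - ρ) * c ^ p
  | none, none => 0

/-- Extend a family of `n` at-most-one-element sets with a dummy empty set at
index `n`. -/
def extOpt {X : Type*} {n : ℕ} (xs : Fin n → Option X) : Fin (n + 1) → Option X :=
  fun i => if h : (i : ℕ) < n then xs ⟨i, h⟩ else none

/-- The relaxed assignment polytope: nonnegative entries, unit column sums for
non-dummy columns, unit row sums for non-dummy rows, and zero dummy-dummy entry. -/
def InPolytope {nX nY : ℕ} (W : Fin (nX + 1) → Fin (nY + 1) → ℝ) : Prop :=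
  (∀ i j, 0 ≤ W i j) ∧
  (∀ j : Fin nY, ∑ i, W i j.castSucc = 1) ∧
  (∀ i : Fin nX, ∑ j, W i.castSucc j = 1) ∧
  W (Fin.last nX) (Fin.last nY) = 0

/-- The objective (before the `1/p`-th root) of the LP T-GOSPA quasi-metric, as a
function of the sequence of relaxed assignment matrices `W`. -/
noncomputable def lpObj {X : Type*} (db : X → X → ℝ) (c p γ ρ : ℝ) {T nX nY : ℕ}
    (Xs : Fin nX → Fin T → Option X) (Ys : Fin nY → Fin T → Option X)
    (W : Fin T → Fin (nX + 1) → Fin (nY + 1) → ℝ) : ℝ :=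
  (∑ k : Fin T, ∑ i, ∑ j, W k i j *
      pairD db c p ρ (extOpt (fun i' => Xs i' k) i) (extOpt (fun j' => Ys j' k) j))
    + γ ^ p / 2 * ∑ k : Fin (T - 1), ∑ i : Fin nX, ∑ j : Fin nY,
        |W ⟨k.1, by have := k.isLt; omega⟩ i.castSucc j.castSucc
          - W ⟨k.1 + 1, by have := k.isLt; omega⟩ i.castSucc j.castSucc|

/-- The LP T-GOSPA quasi-metric: infimum of the rooted objective over sequences of
matrices in the relaxed assignment polytope. -/
noncomputable def lptgospa {X : Type*} (db : X → X → ℝ) (c p γ ρ : ℝ) {T nX nY : ℕ}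
    (Xs : Fin nX → Fin T → Option X) (Ys : Fin nY → Fin T → Option X) : ℝ :=
  sInf { r : ℝ | ∃ W : Fin T → Fin (nX + 1) → Fin (nY + 1) → ℝ,
    (∀ k, InPolytope (W k)) ∧ r = lpObj db c p γ ρ Xs Ys W ^ (1 / p) }

noncomputable def chiO {X : Type*} : Option X → ℝ := fun o => if o.isSome then 1 else 0

lemma extOpt_castSucc {X : Type*} {n : ℕ} (xs : Fin n → Option X) (i : Fin n) :
    extOpt xs i.castSucc = xs i := by
  simp [extOpt]

lemma extOpt_last {X : Type*} {n : ℕ} (xs : Fin n → Option X) :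
    extOpt xs (Fin.last n) = none := by
  simp [extOpt]

lemma pairD_shift {X : Type*} (db : X → X → ℝ) (c p ρ σ : ℝ) (a b : Option X) :
    pairD db c p ρ a b = pairD db c p σ a b + (ρ - σ) * c ^ p * (chiO b - chiO a) := by
  cases a <;> cases b <;> simp [pairD, chiO] <;> ring

lemma pairD_nonneg {X : Type*} {db : X → X → ℝ} (hnn : ∀ a b, 0 ≤ db a b)
    {c p ρ : ℝ} (hc : 0 < c) (h0 : 0 ≤ ρ) (h1 : ρ ≤ 1) (a b : Option X) :
    0 ≤ pairD db c p ρ a b := by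
  have hcp : 0 ≤ c ^ p := Real.rpow_nonneg hc.le p
  cases a <;> cases b <;> simp [pairD]
  · exact mul_nonneg h0 hcp
  · exact mul_nonneg (by linarith) hcp
  · exact Real.rpow_nonneg (le_min hc.le (hnn _ _)) p

lemma pairD_swap {X : Type*} {db : X → X → ℝ} (hsymm : ∀ a b, db a b = db b a)
    (c p : ℝ) (a b : Option X) :
    pairD db c p (1/2) a b = pairD db c p (1/2) b a := by
  cases a <;> cases b <;> simp only [pairD] <;> try norm_num
  rw [hsymm]

lemma polytope_sum_chi {X : Type*} {nX nY : ℕ} {W : Fin (nX + 1) → Fin (nY + 1) → ℝ}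
    (hW : InPolytope W) (xs : Fin nX → Option X) (ys : Fin nY → Option X) :
    ∑ i, ∑ j, W i j * (chiO (extOpt ys j) - chiO (extOpt xs i))
      = (∑ j, chiO (ys j)) - ∑ i, chiO (xs i) := by
  obtain ⟨hnn, hcol, hrow, hlast⟩ := hW
  have h1 : ∑ i, ∑ j, W i j * chiO (extOpt ys j) = ∑ j, chiO (ys j) := by
    rw [Finset.sum_comm]
    have : ∀ j, ∑ i, W i j * chiO (extOpt ys j) = (∑ i, W i j) * chiO (extOpt ys j) := by
      intro j; rw [Finset.sum_mul]
    simp only [this]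
    rw [Fin.sum_univ_castSucc]
    simp [extOpt_last, extOpt_castSucc, chiO, hcol]
  have h2 : ∑ i, ∑ j, W i j * chiO (extOpt xs i) = ∑ i, chiO (xs i) := by
    have : ∀ i, ∑ j, W i j * chiO (extOpt xs i) = (∑ j, W i j) * chiO (extOpt xs i) := by
      intro i; rw [Finset.sum_mul]
    simp only [this]
    rw [Fin.sum_univ_castSucc]
    simp [extOpt_last, extOpt_castSucc, chiO, hrow, mul_comm]
  simp only [mul_sub, Finset.sum_sub_distrib]
  rw [h1, h2]

lemma lpObj_shift {X : Type*} (db : X → X → ℝ) (c p γ ρ σ : ℝ) {T nX nY : ℕ}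
    (Xs : Fin nX → Fin T → Option X) (Ys : Fin nY → Fin T → Option X)
    (W : Fin T → Fin (nX + 1) → Fin (nY + 1) → ℝ) (hW : ∀ k, InPolytope (W k)) :
    lpObj db c p γ ρ Xs Ys W = lpObj db c p γ σ Xs Ys W
      + (ρ - σ) * c ^ p *
          ∑ k : Fin T, ((∑ j, chiO (Ys j k)) - ∑ i, chiO (Xs i k)) := by
  unfold lpObj
  have key : ∀ k : Fin T,
      ∑ i, ∑ j, W k i j * pairD db c p ρ (extOpt (fun i' => Xs i' k) i)
          (extOpt (fun j' => Ys j' k) j)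
        = (∑ i, ∑ j, W k i j * pairD db c p σ (extOpt (fun i' => Xs i' k) i)
            (extOpt (fun j' => Ys j' k) j))
          + (ρ - σ) * c ^ p * ((∑ j, chiO (Ys j k)) - ∑ i, chiO (Xs i k)) := by
    intro k
    have hchi := polytope_sum_chi (hW k) (fun i' => Xs i' k) (fun j' => Ys j' k)
    calc ∑ i, ∑ j, W k i j * pairD db c p ρ (extOpt (fun i' => Xs i' k) i)
            (extOpt (fun j' => Ys j' k) j)
        = ∑ i, ∑ j, (W k i j * pairD db c p σ (extOpt (fun i' => Xs i' k) i)
              (extOpt (fun j' => Ys j' k) j)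
            + (ρ - σ) * c ^ p * (W k i j * (chiO (extOpt (fun j' => Ys j' k) j)
                - chiO (extOpt (fun i' => Xs i' k) i)))) := by
          apply Finset.sum_congr rfl; intro i _
          apply Finset.sum_congr rfl; intro j _
          rw [pairD_shift db c p ρ σ]; ring
      _ = (∑ i, ∑ j, W k i j * pairD db c p σ (extOpt (fun i' => Xs i' k) i)
              (extOpt (fun j' => Ys j' k) j))
            + (ρ - σ) * c ^ p * ∑ i, ∑ j, W k i j * (chiO (extOpt (fun j' => Ys j' k) j)
                - chiO (extOpt (fun i' => Xs i' k) i)) := by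
          simp only [Finset.sum_add_distrib, Finset.mul_sum]
      _ = _ := by rw [hchi]
  simp only [key]
  rw [Finset.sum_add_distrib, ← Finset.mul_sum]
  ring

lemma InPolytope_transpose {nX nY : ℕ} {W : Fin (nX + 1) → Fin (nY + 1) → ℝ}
    (hW : InPolytope W) : InPolytope (fun j i => W i j) := by
  obtain ⟨hnn, hcol, hrow, hlast⟩ := hW
  exact ⟨fun j i => hnn i j, hrow, hcol, hlast⟩

lemma lpObj_transpose {X : Type*} {db : X → X → ℝ} (hsymm : ∀ a b, db a b = db b a)
    (c p γ : ℝ) {T nX nY : ℕ}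
    (Xs : Fin nX → Fin T → Option X) (Ys : Fin nY → Fin T → Option X)
    (W : Fin T → Fin (nY + 1) → Fin (nX + 1) → ℝ) :
    lpObj db c p γ (1/2) Ys Xs W
      = lpObj db c p γ (1/2) Xs Ys (fun k i j => W k j i) := by
  unfold lpObj
  congr 1
  · apply Finset.sum_congr rfl; intro k _
    rw [Finset.sum_comm]
    apply Finset.sum_congr rfl; intro i _
    apply Finset.sum_congr rfl; intro j _
    rw [pairD_swap hsymm]
  · congr 1
    apply Finset.sum_congr rfl; intro k _
    rw [Finset.sum_comm]

/-- The feasible point: mass 1 between each real index and the dummy. -/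
noncomputable def W0 (nX nY : ℕ) : Fin (nX + 1) → Fin (nY + 1) → ℝ := fun i j =>
  if i = Fin.last nX then (if j = Fin.last nY then 0 else 1)
  else (if j = Fin.last nY then 1 else 0)

lemma W0_mem (nX nY : ℕ) : InPolytope (W0 nX nY) := by
  refine ⟨?_, ?_, ?_, ?_⟩
  · intro i j; unfold W0; split <;> split <;> norm_num
  · intro j
    have hj : (j.castSucc : Fin (nY + 1)) ≠ Fin.last nY := by
      simp [Fin.ext_iff]; omega
    have : ∀ i, W0 nX nY i j.castSucc = if i = Fin.last nX then 1 else 0 := by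
      intro i; unfold W0; split <;> simp [hj]
    simp only [this]
    simp
  · intro i
    have hi : (i.castSucc : Fin (nX + 1)) ≠ Fin.last nX := by
      simp [Fin.ext_iff]; omega
    have : ∀ j, W0 nX nY i.castSucc j = if j = Fin.last nY then 1 else 0 := by
      intro j; unfold W0; split <;> simp_all
    simp only [this]
    simp
  · simp [W0]

lemma lpObj_nonneg {X : Type*} {db : X → X → ℝ} (hnn : ∀ a b, 0 ≤ db a b)
    {c p γ ρ : ℝ} (hc : 0 < c) (hγ : 0 < γ) (h0 : 0 ≤ ρ) (h1 : ρ ≤ 1) {T nX nY : ℕ}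
    (Xs : Fin nX → Fin T → Option X) (Ys : Fin nY → Fin T → Option X)
    (W : Fin T → Fin (nX + 1) → Fin (nY + 1) → ℝ) (hW : ∀ k, InPolytope (W k)) :
    0 ≤ lpObj db c p γ ρ Xs Ys W := by
  unfold lpObj
  have h₁ : 0 ≤ ∑ k : Fin T, ∑ i, ∑ j, W k i j *
      pairD db c p ρ (extOpt (fun i' => Xs i' k) i) (extOpt (fun j' => Ys j' k) j) := by
    refine Finset.sum_nonneg fun k _ => Finset.sum_nonneg fun i _ =>
      Finset.sum_nonneg fun j _ => mul_nonneg ((hW k).1 i j) ?_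
    exact pairD_nonneg hnn hc h0 h1 _ _
  have h₂ : 0 ≤ γ ^ p / 2 := by positivity
  have h₃ : 0 ≤ ∑ k : Fin (T - 1), ∑ i : Fin nX, ∑ j : Fin nY,
      |W ⟨k.1, by have := k.isLt; omega⟩ i.castSucc j.castSucc
        - W ⟨k.1 + 1, by have := k.isLt; omega⟩ i.castSucc j.castSucc| :=
    Finset.sum_nonneg fun k _ => Finset.sum_nonneg fun i _ =>
      Finset.sum_nonneg fun j _ => abs_nonneg _
  positivity

lemma sInf_add_const {O : Set ℝ} (d : ℝ) (hne : O.Nonempty) (hbd : BddBelow O) :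
    sInf ((fun x => x + d) '' O) = sInf O + d :=
  ((monotone_id.add_const d).map_csInf_of_continuousAt
    ((continuous_id.add continuous_const).continuousAt) hne hbd).symm

lemma lptgospa_eq_rpow_sInf {X : Type*} (db : X → X → ℝ) (c p γ ρ : ℝ) (hp : 1 ≤ p)
    {T nX nY : ℕ} (Xs : Fin nX → Fin T → Option X) (Ys : Fin nY → Fin T → Option X)
    (hO : ∀ W : Fin T → Fin (nX + 1) → Fin (nY + 1) → ℝ,
      (∀ k, InPolytope (W k)) → 0 ≤ lpObj db c p γ ρ Xs Ys W) :
    lptgospa db c p γ ρ Xs Ys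
      = (sInf { r : ℝ | ∃ W : Fin T → Fin (nX + 1) → Fin (nY + 1) → ℝ,
          (∀ k, InPolytope (W k)) ∧ r = lpObj db c p γ ρ Xs Ys W }) ^ (1 / p) := by
  have hp0 : (0:ℝ) < p := lt_of_lt_of_le one_pos hp
  set O : Set ℝ := { r : ℝ | ∃ W : Fin T → Fin (nX + 1) → Fin (nY + 1) → ℝ,
    (∀ k, InPolytope (W k)) ∧ r = lpObj db c p γ ρ Xs Ys W } with hOdef
  have hne : O.Nonempty := ⟨_, fun _ => W0 nX nY, fun _ => W0_mem nX nY, rfl⟩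
  have hbd : BddBelow O := ⟨0, fun r hr => by obtain ⟨W, hW, rfl⟩ := hr; exact hO W hW⟩
  have hm : 0 ≤ sInf O := le_csInf hne (fun r hr => by obtain ⟨W, hW, rfl⟩ := hr; exact hO W hW)
  set f : ℝ → ℝ := fun x => max x 0 ^ (1 / p) with hfdef
  have hmono : Monotone f := fun x y h =>
    Real.rpow_le_rpow (le_max_right _ _) (max_le_max h le_rfl) (by positivity)
  have hcont : Continuous f :=
    (Real.continuous_rpow_const (by positivity)).comp (continuous_id.max continuous_const)
  have hset : { r : ℝ | ∃ W : Fin T → Fin (nX + 1) → Fin (nY + 1) → ℝ,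
      (∀ k, InPolytope (W k)) ∧ r = lpObj db c p γ ρ Xs Ys W ^ (1 / p) } = f '' O := by
    ext r
    constructor
    · rintro ⟨W, hW, rfl⟩
      exact ⟨lpObj db c p γ ρ Xs Ys W, ⟨W, hW, rfl⟩, by
        simp [hfdef, max_eq_left (hO W hW)]⟩
    · rintro ⟨x, ⟨W, hW, rfl⟩, rfl⟩
      exact ⟨W, hW, by simp [hfdef, max_eq_left (hO W hW)]⟩
  unfold lptgospa
  rw [hset, ← hmono.map_csInf_of_continuousAt hcont.continuousAt hne hbd]
  simp [hfdef, max_eq_left hm]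

/-- Symmetrisation of the LP T-GOSPA quasi-metric: the LP T-GOSPA metric
(`ρ = 1/2`) is recovered by averaging the `p`-th powers of the quasi-metric in
both directions. -/
theorem lptgospa_symmetrisation {X : Type*} (db : X → X → ℝ)
    (hnn : ∀ a b, 0 ≤ db a b) (hid : ∀ a b, db a b = 0 ↔ a = b)
    (htri : ∀ a b e, db a b ≤ db a e + db e b) (hsymm : ∀ a b, db a b = db b a)
    (c p γ ρ : ℝ) (hc : 0 < c) (hp : 1 ≤ p) (hγ : 0 < γ) (hρ : ρ ∈ Set.Ioo (0 : ℝ) 1)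
    {T nX nY : ℕ} (Xs : Fin nX → Fin T → Option X) (Ys : Fin nY → Fin T → Option X) :
    lptgospa db c p γ (1 / 2) Xs Ys
      = (1 / 2 * (lptgospa db c p γ ρ Xs Ys ^ p + lptgospa db c p γ ρ Ys Xs ^ p))
          ^ (1 / p) := by
  obtain ⟨hρ0, hρ1⟩ := hρ
  have hp0 : (0:ℝ) < p := lt_of_lt_of_le one_pos hp
  set K : ℝ := ∑ k : Fin T, ((∑ j, chiO (Ys j k)) - ∑ i, chiO (Xs i k)) with hK
  set δ : ℝ := (ρ - 1/2) * c ^ p * K with hδ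
  set O : Set ℝ := { r : ℝ | ∃ W : Fin T → Fin (nX + 1) → Fin (nY + 1) → ℝ,
    (∀ k, InPolytope (W k)) ∧ r = lpObj db c p γ (1/2) Xs Ys W } with hO
  have hne : O.Nonempty := ⟨_, fun _ => W0 nX nY, fun _ => W0_mem nX nY, rfl⟩
  have hbd : BddBelow O := ⟨0, fun r hr => by
    obtain ⟨W, hW, rfl⟩ := hr
    exact lpObj_nonneg hnn hc hγ (by norm_num) (by norm_num) Xs Ys W hW⟩
  set m : ℝ := sInf O with hm
  have hK' : (∑ k : Fin T, ((∑ i, chiO (Xs i k)) - ∑ j, chiO (Ys j k))) = -K := by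
    rw [hK, Finset.sum_sub_distrib, Finset.sum_sub_distrib]; ring
  -- the ρ-set for (Xs, Ys)
  have hOρ : { r : ℝ | ∃ W : Fin T → Fin (nX + 1) → Fin (nY + 1) → ℝ,
      (∀ k, InPolytope (W k)) ∧ r = lpObj db c p γ ρ Xs Ys W }
        = (fun x => x + δ) '' O := by
    ext r
    constructor
    · rintro ⟨W, hW, rfl⟩
      exact ⟨lpObj db c p γ (1/2) Xs Ys W, ⟨W, hW, rfl⟩,
        (lpObj_shift db c p γ ρ (1/2) Xs Ys W hW).symm⟩
    · rintro ⟨x, ⟨W, hW, rfl⟩, rfl⟩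
      exact ⟨W, hW, (lpObj_shift db c p γ ρ (1/2) Xs Ys W hW).symm⟩
  -- the ρ-set for (Ys, Xs)
  have hOρ' : { r : ℝ | ∃ W : Fin T → Fin (nY + 1) → Fin (nX + 1) → ℝ,
      (∀ k, InPolytope (W k)) ∧ r = lpObj db c p γ ρ Ys Xs W }
        = (fun x => x + (-δ)) '' O := by
    ext r
    constructor
    · rintro ⟨W, hW, rfl⟩
      have h1 := lpObj_shift db c p γ ρ (1/2) Ys Xs W hW
      have h2 := lpObj_transpose hsymm c p γ Xs Ys W
      refine ⟨lpObj db c p γ (1/2) Xs Ys (fun k i j => W k j i),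
        ⟨_, fun k => InPolytope_transpose (hW k), rfl⟩, ?_⟩
      rw [h1, h2, hK', hδ]; ring
    · rintro ⟨x, ⟨V, hV, rfl⟩, rfl⟩
      refine ⟨fun k i j => V k j i, fun k => InPolytope_transpose (hV k), ?_⟩
      have h1 := lpObj_shift db c p γ ρ (1/2) Ys Xs (fun k i j => V k j i)
        (fun k => InPolytope_transpose (hV k))
      have h2 := lpObj_transpose hsymm c p γ Ys Xs V
      rw [h1, ← h2, hK', hδ]; ring
  have e1 : lptgospa db c p γ (1/2) Xs Ys = m ^ (1/p) := by
    rw [lptgospa_eq_rpow_sInf db c p γ (1/2) hp Xs Ys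
      (fun W hW => lpObj_nonneg hnn hc hγ (by norm_num) (by norm_num) Xs Ys W hW), ← hO, ← hm]
  have e2 : lptgospa db c p γ ρ Xs Ys = (m + δ) ^ (1/p) := by
    rw [lptgospa_eq_rpow_sInf db c p γ ρ hp Xs Ys
      (fun W hW => lpObj_nonneg hnn hc hγ hρ0.le hρ1.le Xs Ys W hW), hOρ,
      sInf_add_const δ hne hbd, ← hm]
  have e3 : lptgospa db c p γ ρ Ys Xs = (m + (-δ)) ^ (1/p) := by
    rw [lptgospa_eq_rpow_sInf db c p γ ρ hp Ys Xs
      (fun W hW => lpObj_nonneg hnn hc hγ hρ0.le hρ1.le Ys Xs W hW), hOρ',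
      sInf_add_const (-δ) hne hbd, ← hm]
  have h2 : 0 ≤ m + δ := by
    rw [hm, ← sInf_add_const δ hne hbd, ← hOρ]
    refine le_csInf ⟨_, fun _ => W0 nX nY, fun _ => W0_mem nX nY, rfl⟩ ?_
    rintro r ⟨W, hW, rfl⟩
    exact lpObj_nonneg hnn hc hγ hρ0.le hρ1.le Xs Ys W hW
  have h3 : 0 ≤ m + (-δ) := by
    rw [hm, ← sInf_add_const (-δ) hne hbd, ← hOρ']
    refine le_csInf ⟨_, fun _ => W0 nY nX, fun _ => W0_mem nY nX, rfl⟩ ?_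
    rintro r ⟨W, hW, rfl⟩
    exact lpObj_nonneg hnn hc hγ hρ0.le hρ1.le Ys Xs W hW
  rw [e1, e2, e3, ← Real.rpow_mul h2, ← Real.rpow_mul h3,
    one_div_mul_cancel hp0.ne', Real.rpow_one, Real.rpow_one]
  congr 1
  ring
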